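/- Fix v ∈ (0,1), t > 0, x ∈ ℝ. Suppose n = n(ε) ∈ ℤ_{≥1} and m = m(ε) ∈ ℤ satisfy n·ε² → t and (m - v·n)·ε → x as ε → 0, with n+m even. Then ε^{-1}·exp(n·I(v) + (m - v n)·I'(v))·P⁰(Sₙ = m) → 2·p_{1-v²}(t, x) as ε → 0, where p_{σ²}(t,x) = (2πσ²t)^{-1/2}·exp(-x²/(2σ²t)). -/

import Mathlib

open Filter Topology

/-- The Cramér rate function of a simple symmetric random walk step. -/
noncomputable def rateI (v : ℝ) : ℝ :=
  ((1 - v) / 2) * Real.log (1 - v) + ((1 + v) / 2) * Real.log (1 + v)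

/-- The SSRW transition probability `P⁰(S_n = m)`. -/
noncomputable def ssrwProb (n : ℕ) (m : ℤ) : ℝ :=
  ((Finset.univ.filter fun σ : Fin n → Bool =>
      (∑ i : Fin n, if σ i then (1 : ℤ) else -1) = m).card : ℝ) / 2 ^ n

/-- The density `p_{σ²}(t,x)` of the normal distribution `N(0, σ²t)`. -/
noncomputable def heatKernel (s2 t x : ℝ) : ℝ :=
  (Real.sqrt (2 * Real.pi * s2 * t))⁻¹ * Real.exp (-x ^ 2 / (2 * s2 * t))

section Aux

lemma count_boolfun (nn k : ℕ) :
    (Finset.univ.filter fun σ : Fin nn → Bool =>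
      (∑ i : Fin nn, if σ i then (1 : ℤ) else -1) = 2 * k - nn).card = nn.choose k := by
  have hsum : ∀ σ : Fin nn → Bool,
      (∑ i : Fin nn, if σ i then (1 : ℤ) else -1)
        = 2 * ((Finset.univ.filter fun i => σ i = true).card : ℤ) - nn := by
    intro σ
    have : ∀ i : Fin nn, (if σ i then (1:ℤ) else -1)
        = 2 * (if σ i = true then (1:ℤ) else 0) - 1 := by
      intro i; by_cases h : σ i <;> simp [h]
    rw [Finset.sum_congr rfl fun i _ => this i, Finset.sum_sub_distrib, ← Finset.mul_sum,
      Finset.sum_boole]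
    simp [Finset.card_univ]
  have hcond : ∀ σ : Fin nn → Bool,
      ((∑ i : Fin nn, if σ i then (1 : ℤ) else -1) = 2 * k - nn)
        ↔ (Finset.univ.filter fun i => σ i = true).card = k := by
    intro σ
    rw [hsum σ]
    constructor
    · intro h
      have : ((Finset.univ.filter fun i => σ i = true).card : ℤ) = k := by linarith
      exact_mod_cast this
    · intro h; rw [h]
  rw [Finset.filter_congr fun σ _ => by rw [hcond σ]]
  have hcp : nn.choose k = (Finset.univ.powersetCard k (α := Fin nn)).card := by
    rw [Finset.card_powersetCard]; simp
  rw [hcp]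
  apply Finset.card_bij' (fun σ _ => Finset.univ.filter fun i => σ i = true)
      (fun s _ => fun i => decide (i ∈ s))
  case hi =>
    intro σ hσ
    simp only [Finset.mem_filter, Finset.mem_univ, true_and] at hσ
    simp [Finset.mem_powersetCard, hσ]
  case hj =>
    intro s hs
    simp only [Finset.mem_filter, Finset.mem_univ, true_and]
    simp only [Finset.mem_powersetCard] at hs
    rw [← hs.2]
    congr 1
    ext i
    simp
  case left_inv =>
    intro σ hσ
    funext i
    by_cases h : σ i <;> simp [h]
  case right_inv =>
    intro s hs
    ext i
    simp

lemma rateI_eval (k j : ℕ) (hk : 1 ≤ k) (hj : 1 ≤ j) :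
    ((k + j : ℕ) : ℝ) * rateI (((k : ℝ) - j) / ((k : ℝ) + j)) =
      (j : ℝ) * Real.log j + (k : ℝ) * Real.log k
        - ((k : ℝ) + j) * Real.log ((k : ℝ) + j) + ((k : ℝ) + j) * Real.log 2 := by
  have hK : (0:ℝ) < k := by exact_mod_cast hk
  have hJ : (0:ℝ) < j := by exact_mod_cast hj
  have hN : (0:ℝ) < (k:ℝ) + j := by linarith
  set K := (k:ℝ); set J := (j:ℝ); set N := K + J with hNdef
  have h1 : 1 - (K - J)/N = 2*J/N := by field_simp; ring
  have h2 : 1 + (K - J)/N = 2*K/N := by field_simp; ring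
  have push : ((k + j : ℕ) : ℝ) = N := by push_cast; rfl
  rw [push, rateI, h1, h2]
  have l1 : Real.log (2*J/N) = Real.log 2 + Real.log J - Real.log N := by
    rw [Real.log_div (by positivity) (by positivity), Real.log_mul (by norm_num) (by positivity)]
  have l2 : Real.log (2*K/N) = Real.log 2 + Real.log K - Real.log N := by
    rw [Real.log_div (by positivity) (by positivity), Real.log_mul (by norm_num) (by positivity)]
  rw [l1, l2]
  field_simp
  ring

lemma exp_neg_rateI (k j : ℕ) (hk : 1 ≤ k) (hj : 1 ≤ j) :
    Real.exp (-(((k + j : ℕ) : ℝ) * rateI (((k : ℝ) - j) / ((k : ℝ) + j)))) =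
      ((k : ℝ) + j) ^ (k + j) / ((k : ℝ) ^ k * (j : ℝ) ^ j * 2 ^ (k + j)) := by
  have hK : (0:ℝ) < k := by exact_mod_cast hk
  have hJ : (0:ℝ) < j := by exact_mod_cast hj
  have hN : (0:ℝ) < (k:ℝ) + j := by linarith
  rw [rateI_eval k j hk hj]
  have hcast : ((k:ℝ) + j) = ((k + j : ℕ) : ℝ) := by push_cast; ring
  have e1 : Real.exp ((k:ℝ) * Real.log k) = (k:ℝ) ^ k := by
    rw [Real.exp_nat_mul, Real.exp_log hK]
  have e2 : Real.exp ((j:ℝ) * Real.log j) = (j:ℝ) ^ j := by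
    rw [Real.exp_nat_mul, Real.exp_log hJ]
  have e3 : Real.exp (((k:ℝ) + j) * Real.log ((k:ℝ) + j)) = ((k:ℝ) + j) ^ (k + j) := by
    rw [hcast, Real.exp_nat_mul, Real.exp_log (by rw [← hcast]; exact hN)]
  have e4 : Real.exp (((k:ℝ) + j) * Real.log 2) = (2:ℝ) ^ (k + j) := by
    rw [hcast, Real.exp_nat_mul, Real.exp_log]; norm_num
  have harr : -((j : ℝ) * Real.log j + (k : ℝ) * Real.log k
        - ((k : ℝ) + j) * Real.log ((k : ℝ) + j) + ((k : ℝ) + j) * Real.log 2)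
      = ((k:ℝ)+j) * Real.log ((k:ℝ)+j)
        - ((j:ℝ) * Real.log j + ((k:ℝ) * Real.log k + ((k:ℝ)+j) * Real.log 2)) := by ring
  rw [harr, Real.exp_sub, Real.exp_add, Real.exp_add, e1, e2, e3, e4]
  ring

lemma choose_rep (k j : ℕ) (hk : 1 ≤ k) (hj : 1 ≤ j) :
    (((k + j).choose k : ℕ) : ℝ) / 2 ^ (k + j) =
      (Stirling.stirlingSeq (k + j) / (Stirling.stirlingSeq k * Stirling.stirlingSeq j)) *
        Real.sqrt (((k : ℝ) + j) / (2 * k * j)) *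
        Real.exp (-(((k + j : ℕ) : ℝ) * rateI (((k : ℝ) - j) / ((k : ℝ) + j)))) := by
  have hK : (0:ℝ) < k := by exact_mod_cast hk
  have hJ : (0:ℝ) < j := by exact_mod_cast hj
  have hN : (0:ℝ) < (k:ℝ) + j := by linarith
  rw [exp_neg_rateI k j hk hj]
  have fac : ∀ nn : ℕ, 1 ≤ nn → (nn.factorial : ℝ)
      = Stirling.stirlingSeq nn * (Real.sqrt (2 * nn) * ((nn : ℝ) / Real.exp 1) ^ nn) := by
    intro nn hnn
    have h0 : (0:ℝ) < nn := by exact_mod_cast hnn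
    rw [Stirling.stirlingSeq, div_mul_cancel₀]
    positivity
  have hchoose : (((k + j).choose k : ℕ) : ℝ)
      = ((k+j).factorial : ℝ) / ((k.factorial : ℝ) * (j.factorial : ℝ)) := by
    have h := Nat.choose_mul_factorial_mul_factorial (Nat.le_add_right k j)
    rw [Nat.add_sub_cancel_left] at h
    have h2 : (k.factorial : ℝ) * (j.factorial : ℝ) ≠ 0 := by positivity
    rw [eq_div_iff h2, ← mul_assoc]
    exact_mod_cast h
  have hsq : Real.sqrt (((k:ℝ)+j)/(2*(k:ℝ)*j)) * (Real.sqrt (2*(k:ℝ)) * Real.sqrt (2*(j:ℝ)))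
      = Real.sqrt (2*((k:ℝ)+j)) := by
    rw [← Real.sqrt_mul (by positivity), ← Real.sqrt_mul (by positivity)]
    congr 1
    field_simp
  have hpow : (((k:ℝ)+j)/Real.exp 1)^(k+j) * ((k:ℝ)^k * (j:ℝ)^j)
      = ((k:ℝ)+j)^(k+j) * (((k:ℝ)/Real.exp 1)^k * ((j:ℝ)/Real.exp 1)^j) := by
    have h : ∀ E : ℝ, E ≠ 0 → (((k:ℝ)+j)/E)^(k+j) * ((k:ℝ)^k * (j:ℝ)^j)
        = ((k:ℝ)+j)^(k+j) * (((k:ℝ)/E)^k * ((j:ℝ)/E)^j) := by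
      intro E hE
      rw [div_pow, div_pow, div_pow, pow_add]
      field_simp
      ring
    exact h _ (Real.exp_pos 1).ne'
  have key : Real.sqrt (2*((k:ℝ)+j)) * (((k:ℝ)+j)/Real.exp 1)^(k+j) * ((k:ℝ)^k * (j:ℝ)^j)
      = Real.sqrt (((k:ℝ)+j)/(2*(k:ℝ)*j)) * ((k:ℝ)+j)^(k+j) *
        ((Real.sqrt (2*(k:ℝ)) * ((k:ℝ)/Real.exp 1)^k) *
          (Real.sqrt (2*(j:ℝ)) * ((j:ℝ)/Real.exp 1)^j)) := by
    linear_combination Real.sqrt (2*((k:ℝ)+j)) * hpow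
      - (((k:ℝ)+j)^(k+j) * (((k:ℝ)/Real.exp 1)^k * ((j:ℝ)/Real.exp 1)^j)) * hsq
  have hSk : 0 < Stirling.stirlingSeq k := by
    obtain ⟨k', rfl⟩ := Nat.exists_eq_add_of_le hk
    rw [add_comm]; exact Stirling.stirlingSeq'_pos k'
  have hSj : 0 < Stirling.stirlingSeq j := by
    obtain ⟨j', cfl⟩ := Nat.exists_eq_add_of_le hj
    rw [cfl, add_comm]; exact Stirling.stirlingSeq'_pos j'
  have hc : ((k + j : ℕ) : ℝ) = (k:ℝ) + j := by push_cast; ring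
  rw [hchoose, fac (k+j) (by omega), fac k hk, fac j hj, hc]
  have hRHS : Stirling.stirlingSeq (k + j) / (Stirling.stirlingSeq k * Stirling.stirlingSeq j) *
        Real.sqrt (((k : ℝ) + j) / (2 * k * j)) *
        (((k:ℝ)+j)^(k+j) / ((k:ℝ)^k * (j:ℝ)^j * 2^(k+j)))
      = (Stirling.stirlingSeq (k + j) * Real.sqrt (((k : ℝ) + j) / (2 * k * j)) *
          ((k:ℝ)+j)^(k+j)) /
        ((Stirling.stirlingSeq k * Stirling.stirlingSeq j) * ((k:ℝ)^k * (j:ℝ)^j * 2^(k+j))) := by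
    rw [div_mul_eq_mul_div, div_mul_div_comm]
  rw [hRHS, div_div, div_eq_div_iff (by positivity) (by positivity)]
  linear_combination (Stirling.stirlingSeq (k+j) * Stirling.stirlingSeq k *
    Stirling.stirlingSeq j * 2^(k+j) : ℝ) * key

lemma hasDerivAt_rateI {u : ℝ} (h1 : -1 < u) (h2 : u < 1) :
    HasDerivAt rateI ((1/2) * (Real.log (1+u) - Real.log (1-u))) u := by
  have hm : (1:ℝ) - u ≠ 0 := by linarith
  have hp : (1:ℝ) + u ≠ 0 := by linarith
  have d1 : HasDerivAt (fun v : ℝ => 1 - v) (-1) u := by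
    simpa using (hasDerivAt_id u).const_sub 1
  have d2 : HasDerivAt (fun v : ℝ => 1 + v) 1 u := by
    simpa using (hasDerivAt_id u).const_add 1
  have dl1 : HasDerivAt (fun v : ℝ => Real.log (1 - v)) ((1-u)⁻¹ * (-1)) u :=
    (Real.hasDerivAt_log hm).comp u d1
  have dl2 : HasDerivAt (fun v : ℝ => Real.log (1 + v)) ((1+u)⁻¹ * 1) u :=
    (Real.hasDerivAt_log hp).comp u d2
  have t1 : HasDerivAt (fun v : ℝ => ((1 - v)/2) * Real.log (1 - v))
      ((-1/2) * Real.log (1-u) + ((1-u)/2) * ((1-u)⁻¹ * (-1))) u :=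
    (d1.div_const 2).mul dl1
  have t2 : HasDerivAt (fun v : ℝ => ((1 + v)/2) * Real.log (1 + v))
      ((1/2) * Real.log (1+u) + ((1+u)/2) * ((1+u)⁻¹ * 1)) u :=
    (d2.div_const 2).mul dl2
  have := t1.add t2
  refine this.congr_deriv ?_
  field_simp
  ring

lemma hasDerivAt_artanh {u : ℝ} (h1 : -1 < u) (h2 : u < 1) :
    HasDerivAt (fun w : ℝ => (1/2) * (Real.log (1+w) - Real.log (1-w))) (1/(1-u^2)) u := by
  have hm : (1:ℝ) - u ≠ 0 := by linarith
  have hp : (1:ℝ) + u ≠ 0 := by linarith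
  have d1 : HasDerivAt (fun v : ℝ => 1 - v) (-1) u := by
    simpa using (hasDerivAt_id u).const_sub 1
  have d2 : HasDerivAt (fun v : ℝ => 1 + v) 1 u := by
    simpa using (hasDerivAt_id u).const_add 1
  have dl1 : HasDerivAt (fun v : ℝ => Real.log (1 - v)) ((1-u)⁻¹ * (-1)) u :=
    (Real.hasDerivAt_log hm).comp u d1
  have dl2 : HasDerivAt (fun v : ℝ => Real.log (1 + v)) ((1+u)⁻¹ * 1) u :=
    (Real.hasDerivAt_log hp).comp u d2
  have := ((dl2.sub dl1).const_mul (1/2 : ℝ))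
  refine this.congr_deriv ?_
  have h : (1:ℝ) - u^2 = (1+u)*(1-u) := by ring
  rw [h]
  field_simp
  ring

lemma taylor_lim (v : ℝ) (hv1 : -1 < v) (hv2 : v < 1) :
    Tendsto (fun δ => (rateI (v+δ) - rateI v
        - δ * ((1/2)*(Real.log (1+v) - Real.log (1-v)))) / δ^2)
      (nhdsWithin (0:ℝ) {0}ᶜ) (nhds (1/(2*(1-v^2)))) := by
  set A : ℝ → ℝ := fun w => (1/2)*(Real.log (1+w) - Real.log (1-w)) with hA
  have hball : ∀ᶠ δ in nhds (0:ℝ), v + δ ∈ Set.Ioo (-1:ℝ) 1 := by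
    have hmap : Tendsto (fun δ : ℝ => v + δ) (nhds 0) (nhds v) := by
      simpa using (tendsto_const_nhds.add tendsto_id :
        Tendsto (fun δ:ℝ => v + δ) (nhds 0) (nhds (v+0)))
    exact hmap (Ioo_mem_nhds hv1 hv2)
  have hadd : ∀ δ : ℝ, HasDerivAt (fun y : ℝ => v + y) 1 δ := fun δ => by
    simpa using (hasDerivAt_id δ).const_add v
  apply HasDerivAt.lhopital_zero_nhdsNE
    (f' := fun δ => A (v + δ) - A v) (g' := fun δ => 2 * δ)
  · filter_upwards [eventually_nhdsWithin_of_eventually_nhds hball] with δ hδ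
    have dfδ : HasDerivAt (fun y => rateI (v+y)) (A (v+δ)) δ := by
      have := (hasDerivAt_rateI hδ.1 hδ.2).comp δ (hadd δ)
      simpa [hA, Function.comp_def] using this
    have dlin : HasDerivAt (fun y : ℝ => y * A v) (A v) δ := by
      simpa using (hasDerivAt_id δ).mul_const (A v)
    exact (dfδ.sub_const (rateI v)).sub dlin
  · exact Eventually.of_forall fun δ => by
      simpa [mul_comm] using hasDerivAt_pow 2 δ
  · filter_upwards [self_mem_nhdsWithin] with δ (hδ : δ ≠ 0)
    simpa using hδ
  · have c1 : Tendsto (fun δ => rateI (v+δ)) (nhds 0) (nhds (rateI v)) := by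
      have hmap : Tendsto (fun δ : ℝ => v + δ) (nhds 0) (nhds v) := by
        simpa using (tendsto_const_nhds.add tendsto_id :
          Tendsto (fun δ:ℝ => v + δ) (nhds 0) (nhds (v+0)))
      exact ((hasDerivAt_rateI hv1 hv2).continuousAt.tendsto).comp (by simpa using hmap)
    have h : Tendsto (fun δ => rateI (v+δ) - rateI v - δ * A v) (nhds 0)
        (nhds (rateI v - rateI v - 0 * A v)) :=
      (c1.sub tendsto_const_nhds).sub (tendsto_id.mul_const (A v))
    exact (by simpa [hA] using h : Tendsto _ (nhds (0:ℝ)) (nhds (0:ℝ))).mono_left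
      nhdsWithin_le_nhds
  · have h : Tendsto (fun δ : ℝ => δ^2) (nhds 0) (nhds ((0:ℝ)^2)) := (continuous_pow 2).tendsto 0
    exact (by simpa using h : Tendsto (fun δ : ℝ => δ^2) (nhds (0:ℝ)) (nhds (0:ℝ))).mono_left
      nhdsWithin_le_nhds
  · have hmap : Tendsto (fun δ : ℝ => v + δ) (nhdsWithin (0:ℝ) {0}ᶜ) (nhdsWithin v {v}ᶜ) := by
      apply tendsto_nhdsWithin_of_tendsto_nhds_of_eventually_within
      · have h : Tendsto (fun δ : ℝ => v + δ) (nhds 0) (nhds v) := by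
          simpa using (tendsto_const_nhds.add tendsto_id :
            Tendsto (fun δ:ℝ => v + δ) (nhds 0) (nhds (v+0)))
        exact h.mono_left nhdsWithin_le_nhds
      · filter_upwards [self_mem_nhdsWithin] with δ (hδ : δ ≠ 0)
        simp only [Set.mem_compl_iff, Set.mem_singleton_iff]
        intro h
        exact hδ (by linarith)
    have hslope := (hasDerivAt_iff_tendsto_slope.mp (hasDerivAt_artanh hv1 hv2)).comp hmap
    have h2 := hslope.div_const 2
    have hval : 1/(1-v^2)/2 = 1/(2*(1-v^2)) := by
      rw [div_div, mul_comm]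
    rw [← hval]
    apply Tendsto.congr' _ h2
    filter_upwards [self_mem_nhdsWithin] with δ (hδ : δ ≠ 0)
    simp only [Function.comp_apply, slope_def_field, hA]
    field_simp
    rw [add_sub_cancel_left, mul_div_cancel_left₀ _ hδ]

lemma final_value (v t x : ℝ) (hvm : -1 < v) (hv2 : v < 1) (ht : 0 < t) :
    Real.sqrt Real.pi / (Real.sqrt Real.pi * Real.sqrt Real.pi) *
      Real.sqrt ((2/(1-v^2))/t) * Real.exp (-(x^2/t) * (1/(2*(1-v^2))))
    = 2 * heatKernel (1-v^2) t x := by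
  have hs : (0:ℝ) < 1 - v^2 := by nlinarith
  have hπ := Real.pi_pos
  rw [heatKernel]
  have hexp : -(x^2/t) * (1/(2*(1-v^2))) = -x^2/(2*(1-v^2)*t) := by
    field_simp
  rw [hexp]
  have h1 : Real.sqrt Real.pi ≠ 0 := by positivity
  have hst : (0:ℝ) < (1-v^2)*t := by positivity
  have h2 : Real.sqrt ((2/(1-v^2))/t) = Real.sqrt 2 / Real.sqrt ((1-v^2)*t) := by
    rw [div_div, Real.sqrt_div (by norm_num : (0:ℝ) ≤ 2)]
  have h3 : Real.sqrt (2*Real.pi*(1-v^2)*t)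
      = Real.sqrt 2 * (Real.sqrt Real.pi * Real.sqrt ((1-v^2)*t)) := by
    rw [show 2*Real.pi*(1-v^2)*t = 2*(Real.pi*((1-v^2)*t)) by ring,
      Real.sqrt_mul (by norm_num : (0:ℝ) ≤ 2), Real.sqrt_mul hπ.le]
  rw [h2, h3]
  rw [div_mul_cancel_left₀ h1]
  set a := Real.sqrt Real.pi with ha
  set b := Real.sqrt 2 with hb
  set c := Real.sqrt ((1-v^2)*t) with hc
  have h4 : c ≠ 0 := by rw [hc]; positivity
  have h5 : b ≠ 0 := by rw [hb]; positivity
  have h6 : b * b = 2 := Real.mul_self_sqrt (by norm_num)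
  have hE : Real.exp (-x^2/(2*(1-v^2)*t)) ≠ 0 := (Real.exp_pos _).ne'
  field_simp
  linear_combination h6

end Aux

/-- Sharp (local) large deviation limit for the SSRW (Lemma A.1 with
`m₁ = m₂ = 0`): along lattice approximations `n(ε)·ε² → t`,
`(m(ε) - v·n(ε))·ε → x` with `n + m` even,
`ε⁻¹ · exp(n·I(v) + (m - vn)·I'(v)) · P⁰(Sₙ = m) → 2·p_{1-v²}(t,x)`. -/
theorem ssrw_sharp_ldp (v t x : ℝ) (hv : v ∈ Set.Ioo (0 : ℝ) 1) (ht : 0 < t)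
    (n : ℝ → ℕ) (m : ℝ → ℤ)
    (hn1 : ∀ ε > (0 : ℝ), 1 ≤ n ε)
    (hpar : ∀ ε > (0 : ℝ), Even ((n ε : ℤ) + m ε))
    (hnt : Tendsto (fun ε => (n ε : ℝ) * ε ^ 2) (nhdsWithin 0 (Set.Ioi 0)) (nhds t))
    (hmx : Tendsto (fun ε => ((m ε : ℝ) - v * (n ε : ℝ)) * ε)
      (nhdsWithin 0 (Set.Ioi 0)) (nhds x)) :
    Tendsto
      (fun ε : ℝ => ε⁻¹ *
        Real.exp ((n ε : ℝ) * rateI v +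
          ((m ε : ℝ) - v * (n ε : ℝ)) * ((1 / 2) * Real.log ((1 + v) / (1 - v)))) *
        ssrwProb (n ε) (m ε))
      (nhdsWithin 0 (Set.Ioi 0)) (nhds (2 * heatKernel (1 - v ^ 2) t x)) := by
  obtain ⟨hv0, hv1⟩ := hv
  have hv1' : (-1:ℝ) < v := by linarith
  have hs2 : (0:ℝ) < 1 - v^2 := by nlinarith
  set l : Filter ℝ := nhdsWithin 0 (Set.Ioi 0) with hldef
  have hεpos : ∀ᶠ ε in l, (0:ℝ) < ε := by
    filter_upwards [self_mem_nhdsWithin] with ε hε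
    exact hε
  have hε0 : Tendsto (fun ε : ℝ => ε) l (nhds 0) :=
    tendsto_id.mono_right nhdsWithin_le_nhds
  -- ε² tends to 0 within (0, ∞)
  have hε2 : Tendsto (fun ε : ℝ => ε^2) l (nhdsWithin 0 (Set.Ioi 0)) := by
    apply tendsto_nhdsWithin_of_tendsto_nhds_of_eventually_within
    · simpa using hε0.pow 2
    · filter_upwards [hεpos] with ε hε
      exact pow_pos hε 2
  have hinv2 : Tendsto (fun ε : ℝ => (ε^2)⁻¹) l atTop := tendsto_inv_nhdsGT_zero.comp hε2
  -- n → ∞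
  have hNinf : Tendsto (fun ε => (n ε : ℝ)) l atTop := by
    apply (Filter.Tendsto.pos_mul_atTop ht hnt hinv2).congr'
    filter_upwards [hεpos] with ε hε
    field_simp
  have hNnat : Tendsto n l atTop := tendsto_natCast_atTop_iff.mp hNinf
  have hn1' : ∀ᶠ ε in l, 1 ≤ n ε := by
    filter_upwards [hεpos] with ε hε; exact hn1 ε hε
  have hpar' : ∀ᶠ ε in l, Even ((n ε : ℤ) + m ε) := by
    filter_upwards [hεpos] with ε hε; exact hpar ε hε
  have hNpos : ∀ᶠ ε in l, (0:ℝ) < (n ε : ℝ) := by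
    filter_upwards [hn1'] with ε hε
    exact_mod_cast Nat.lt_of_lt_of_le Nat.zero_lt_one hε
  -- (m - vn)/n → 0
  have hu0 : Tendsto (fun ε => ((m ε:ℝ) - v*(n ε:ℝ))/(n ε:ℝ)) l (nhds 0) := by
    have h := (hmx.div hnt ht.ne').mul hε0
    apply Tendsto.congr' _ (by simpa using h)
    filter_upwards [hεpos, hNpos] with ε h1 h2
    field_simp
  -- m/n → v
  have hu : Tendsto (fun ε => (m ε:ℝ)/(n ε:ℝ)) l (nhds v) := by
    apply Tendsto.congr' _ (by simpa using hu0.const_add v)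
    filter_upwards [hNpos] with ε hN
    field_simp
    ring
  have hmem : ∀ᶠ ε in l, (m ε:ℝ)/(n ε:ℝ) ∈ Set.Ioo (v/2) ((v+1)/2) :=
    hu (Ioo_mem_nhds (by linarith) (by linarith))
  have hgood : ∀ᶠ ε in l, (0:ℤ) < m ε ∧ m ε < (n ε:ℤ) := by
    filter_upwards [hmem, hNpos] with ε h1 h2
    have hq0 : (0:ℝ) < (m ε:ℝ)/(n ε:ℝ) := lt_trans (by linarith) h1.1
    have hM : (0:ℝ) < (m ε:ℝ) := by
      rcases div_pos_iff.mp hq0 with ⟨h, _⟩ | ⟨_, h⟩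
      · exact h
      · linarith
    have hq1 : (m ε:ℝ)/(n ε:ℝ) < 1 := lt_trans h1.2 (by linarith)
    have hMn : (m ε:ℝ) < (n ε:ℝ) := (div_lt_one h2).mp hq1
    exact ⟨by exact_mod_cast hM, by exact_mod_cast hMn⟩
  set K : ℝ → ℕ := fun ε => (((n ε : ℤ) + m ε)/2).toNat with hKdef
  set J : ℝ → ℕ := fun ε => n ε - K ε with hJdef
  have hfacts : ∀ᶠ ε in l, 2*(K ε:ℤ) = (n ε:ℤ) + m ε ∧ K ε + J ε = n ε ∧
      1 ≤ K ε ∧ 1 ≤ J ε := by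
    filter_upwards [hgood, hpar', hn1'] with ε hg hp h1
    obtain ⟨c, hc⟩ := hp
    simp only [hKdef, hJdef]
    refine ⟨by omega, by omega, by omega, by omega⟩
  have hKr : ∀ᶠ ε in l, (K ε : ℝ) = ((n ε:ℝ) + (m ε:ℝ))/2 := by
    filter_upwards [hfacts] with ε hf
    have := hf.1
    push_cast
    have h2 : (2:ℝ)*(K ε:ℝ) = (n ε:ℝ) + (m ε:ℝ) := by exact_mod_cast this
    linarith
  have hJr : ∀ᶠ ε in l, (J ε : ℝ) = ((n ε:ℝ) - (m ε:ℝ))/2 := by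
    filter_upwards [hfacts] with ε hf
    have h1 : (K ε:ℝ) + (J ε:ℝ) = (n ε:ℝ) := by exact_mod_cast congrArg (Nat.cast : ℕ → ℝ) hf.2.1
    have h2 : (2:ℝ)*(K ε:ℝ) = (n ε:ℝ) + (m ε:ℝ) := by exact_mod_cast hf.1
    linarith
  -- K, J → ∞
  have hKinf : Tendsto (fun ε => (K ε:ℝ)) l atTop := by
    apply tendsto_atTop_mono' l _ (hNinf.atTop_div_const two_pos)
    filter_upwards [hKr, hgood] with ε h1 h2
    rw [h1]
    have : (0:ℝ) < (m ε:ℝ) := by exact_mod_cast h2.1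
    have hd : ((n ε:ℝ))/2 ≤ ((n ε:ℝ) + (m ε:ℝ))/2 := by linarith
    exact hd
  have hJinf : Tendsto (fun ε => (J ε:ℝ)) l atTop := by
    apply tendsto_atTop_mono' l _ (hNinf.atTop_mul_const (by linarith : (0:ℝ) < (1-v)/4))
    filter_upwards [hJr, hmem, hNpos] with ε h1 h2 h3
    rw [h1]
    have hM : (m ε:ℝ) < (n ε:ℝ) * ((v+1)/2) := by
      have := (div_lt_iff₀ h3).mp h2.2
      linarith
    have : (n ε:ℝ) * ((1-v)/4) ≤ ((n ε:ℝ) - (m ε:ℝ))/2 := by nlinarith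
    exact this
  have hKnat : Tendsto K l atTop := tendsto_natCast_atTop_iff.mp hKinf
  have hJnat : Tendsto J l atTop := tendsto_natCast_atTop_iff.mp hJinf
  have hπ := Real.pi_pos
  have hsqrtπ : (0:ℝ) < Real.sqrt Real.pi := Real.sqrt_pos.mpr hπ
  -- Stirling ratio
  have hS : Tendsto (fun ε => Stirling.stirlingSeq (n ε) /
      (Stirling.stirlingSeq (K ε) * Stirling.stirlingSeq (J ε))) l
      (nhds (Real.sqrt Real.pi / (Real.sqrt Real.pi * Real.sqrt Real.pi))) :=
    (Stirling.tendsto_stirlingSeq_sqrt_pi.comp hNnat).div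
      ((Stirling.tendsto_stirlingSeq_sqrt_pi.comp hKnat).mul
        (Stirling.tendsto_stirlingSeq_sqrt_pi.comp hJnat)) (by positivity)
  -- K/n, J/n limits
  have hKdivN : Tendsto (fun ε => (K ε:ℝ)/(n ε:ℝ)) l (nhds ((1+v)/2)) := by
    apply Tendsto.congr' _ ((hu.const_add 1).div_const 2)
    filter_upwards [hKr, hNpos] with ε h1 h2
    rw [h1]
    field_simp
  have hJdivN : Tendsto (fun ε => (J ε:ℝ)/(n ε:ℝ)) l (nhds ((1-v)/2)) := by
    have h : Tendsto (fun ε => (1 - (m ε:ℝ)/(n ε:ℝ))/2) l (nhds ((1-v)/2)) :=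
      ((tendsto_const_nhds.sub hu).div_const 2)
    apply Tendsto.congr' _ h
    filter_upwards [hJr, hNpos] with ε h1 h2
    rw [h1]
    field_simp
  -- the sqrt factor
  have hAq : Tendsto (fun ε => (1/(2*((K ε:ℝ)/(n ε:ℝ))*((J ε:ℝ)/(n ε:ℝ))))/((n ε:ℝ)*ε^2)) l
      (nhds ((2/(1-v^2))/t)) := by
    have hden : Tendsto (fun ε => 2*((K ε:ℝ)/(n ε:ℝ))*((J ε:ℝ)/(n ε:ℝ))) l
        (nhds (2*((1+v)/2)*((1-v)/2))) := (hKdivN.const_mul 2).mul hJdivN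
    have hdenne : (2:ℝ)*((1+v)/2)*((1-v)/2) ≠ 0 := by
      have : (2:ℝ)*((1+v)/2)*((1-v)/2) = (1-v^2)/2 := by ring
      rw [this]
      positivity
    have hfrac := (tendsto_const_nhds (x := (1:ℝ))).div hden hdenne
    have h := hfrac.div hnt ht.ne'
    have hval : (1:ℝ)/(2*((1+v)/2)*((1-v)/2))/t = (2/(1-v^2))/t := by
      rw [show (2:ℝ)*((1+v)/2)*((1-v)/2) = (1-v^2)/2 by ring]
      rw [one_div_div]
    rw [← hval]
    exact h
  have hsqrtA : Tendsto (fun ε => Real.sqrt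
      ((1/(2*((K ε:ℝ)/(n ε:ℝ))*((J ε:ℝ)/(n ε:ℝ))))/((n ε:ℝ)*ε^2))) l
      (nhds (Real.sqrt ((2/(1-v^2))/t))) :=
    (Real.continuous_sqrt.tendsto _).comp hAq
  -- the exponential factor
  set hfun : ℝ → ℝ := fun δ => if δ = 0 then 1/(2*(1-v^2)) else
    (rateI (v+δ) - rateI v - δ * ((1/2)*(Real.log (1+v) - Real.log (1-v))))/δ^2 with hfundef
  have hcont : Tendsto hfun (nhds 0) (nhds (1/(2*(1-v^2)))) := by
    rw [← nhdsNE_sup_pure (0:ℝ), tendsto_sup]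
    constructor
    · apply Tendsto.congr' _ (taylor_lim v hv1' hv1)
      filter_upwards [self_mem_nhdsWithin] with δ (hδ : δ ≠ 0)
      simp only [hfundef, if_neg hδ]
    · have h := tendsto_pure_nhds hfun 0
      simpa [hfundef] using h
  have hδ0 : Tendsto (fun ε => (m ε:ℝ)/(n ε:ℝ) - v) l (nhds 0) := by
    simpa using hu.sub_const v
  have hcomp : Tendsto (fun ε => hfun ((m ε:ℝ)/(n ε:ℝ) - v)) l (nhds (1/(2*(1-v^2)))) :=
    hcont.comp hδ0
  have hd2 : Tendsto (fun ε => ((m ε:ℝ) - v*(n ε:ℝ))^2/(n ε:ℝ)) l (nhds (x^2/t)) := by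
    have h := (hmx.pow 2).div hnt ht.ne'
    apply Tendsto.congr' _ h
    filter_upwards [hεpos, hNpos] with ε h1 h2
    simp only [Pi.div_apply]
    field_simp
  have hGlim : Tendsto (fun ε => -(((m ε:ℝ) - v*(n ε:ℝ))^2/(n ε:ℝ)) *
      hfun ((m ε:ℝ)/(n ε:ℝ) - v)) l (nhds (-(x^2/t) * (1/(2*(1-v^2))))) :=
    hd2.neg.mul hcomp
  have hexp : Tendsto (fun ε => Real.exp (-(((m ε:ℝ) - v*(n ε:ℝ))^2/(n ε:ℝ)) *
      hfun ((m ε:ℝ)/(n ε:ℝ) - v))) l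
      (nhds (Real.exp (-(x^2/t) * (1/(2*(1-v^2)))))) :=
    (Real.continuous_exp.tendsto _).comp hGlim
  -- final
  rw [show 2 * heatKernel (1 - v ^ 2) t x
    = Real.sqrt Real.pi / (Real.sqrt Real.pi * Real.sqrt Real.pi) *
      Real.sqrt ((2/(1-v^2))/t) * Real.exp (-(x^2/t) * (1/(2*(1-v^2))))
    from (final_value v t x hv1' hv1 ht).symm]
  apply Tendsto.congr' _ ((hS.mul hsqrtA).mul hexp)
  filter_upwards [hεpos, hfacts, hgood, hNpos, hKr, hJr] with ε hε hf hg hN hkr hjr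
  obtain ⟨hf1, hf2, hf3, hf4⟩ := hf
  have hKpos : (0:ℝ) < (K ε:ℝ) := by exact_mod_cast hf3
  have hJpos : (0:ℝ) < (J ε:ℝ) := by exact_mod_cast hf4
  -- counting
  have hm' : m ε = 2*(K ε:ℤ) - (n ε:ℤ) := by omega
  have hcount : ssrwProb (n ε) (m ε) = (((n ε).choose (K ε) : ℕ) : ℝ)/2^(n ε) := by
    rw [ssrwProb, hm', count_boolfun (n ε) (K ε)]
  -- Stirling representation
  have hKJn : K ε + J ε = n ε := hf2
  have hKmJ : (K ε:ℝ) - (J ε:ℝ) = (m ε:ℝ) := by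
    rw [hkr, hjr]; ring
  have hKpJ : (K ε:ℝ) + (J ε:ℝ) = (n ε:ℝ) := by
    rw [hkr, hjr]; ring
  have hrep : (((n ε).choose (K ε) : ℕ) : ℝ)/2^(n ε)
      = (Stirling.stirlingSeq (n ε) / (Stirling.stirlingSeq (K ε) * Stirling.stirlingSeq (J ε))) *
        Real.sqrt ((n ε:ℝ) / (2 * (K ε:ℝ) * (J ε:ℝ))) *
        Real.exp (-((n ε:ℝ) * rateI ((m ε:ℝ) / (n ε:ℝ)))) := by
    rw [← hKJn]
    have := choose_rep (K ε) (J ε) hf3 hf4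
    rw [this]
    rw [hKmJ, hKpJ]
    norm_cast
    rw [hKJn]
  -- sqrt factor identity
  have hAqeq : Real.sqrt ((1/(2*((K ε:ℝ)/(n ε:ℝ))*((J ε:ℝ)/(n ε:ℝ))))/((n ε:ℝ)*ε^2))
      = ε⁻¹ * Real.sqrt ((n ε:ℝ) / (2 * (K ε:ℝ) * (J ε:ℝ))) := by
    have harg : (1/(2*((K ε:ℝ)/(n ε:ℝ))*((J ε:ℝ)/(n ε:ℝ))))/((n ε:ℝ)*ε^2)
        = ((n ε:ℝ) / (2 * (K ε:ℝ) * (J ε:ℝ))) * (ε⁻¹)^2 := by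
      field_simp
    rw [harg, Real.sqrt_mul (by positivity), Real.sqrt_sq (by positivity)]
    ring
  -- exponent identity
  have hlogdiv : Real.log ((1+v)/(1-v)) = Real.log (1+v) - Real.log (1-v) :=
    Real.log_div (by linarith) (by linarith)
  have hGid : (n ε:ℝ) * rateI v + ((m ε:ℝ) - v*(n ε:ℝ)) *
        ((1/2) * Real.log ((1+v)/(1-v))) - (n ε:ℝ) * rateI ((m ε:ℝ)/(n ε:ℝ))
      = -(((m ε:ℝ) - v*(n ε:ℝ))^2/(n ε:ℝ)) * hfun ((m ε:ℝ)/(n ε:ℝ) - v) := by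
    rw [hlogdiv]
    set δ : ℝ := (m ε:ℝ)/(n ε:ℝ) - v with hδd
    have hvd : v + δ = (m ε:ℝ)/(n ε:ℝ) := by rw [hδd]; ring
    have hdN : (m ε:ℝ) - v*(n ε:ℝ) = (n ε:ℝ) * δ := by
      rw [hδd]
      field_simp
    by_cases hδ : δ = 0
    · rw [hfundef]
      simp only [if_pos hδ]
      have : (m ε:ℝ)/(n ε:ℝ) = v := by rw [← hvd, hδ, add_zero]
      rw [this, hdN, hδ]
      ring
    · rw [hfundef]
      simp only [if_neg hδ]
      rw [← hvd, hdN]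
      field_simp
      ring
  -- put it together
  rw [hcount, hrep, ← hGid, hAqeq, Real.exp_sub, Real.exp_neg]
  ring
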